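/- arXiv:2405.07987 — 3 statements merged into one kernel-verified Lean document; each statement's English description precedes it below -/
import Mathlib

section
/- Let N ≥ 1 and let K be a symmetric N×N real matrix. Suppose there exist real numbers L and δ ≥ 0 with L + δ ≤ 0 such that every off-diagonal entry satisfies L ≤ K i j ≤ L + δ for all i ≠ j, and every diagonal entry satisfies K i i ≥ L + N·δ. Then for the specific choice C := - min over i of (1/N) · (∑_{j} K i j), the matrix whose (i,j) entry is K i j + C is positive semidefinite. -/
/-!
Shifting `K` by `C` makes every row sum nonnegative, since `-C` is the least row average.
The hypotheses force every row sum of `K` to be at least `N (L + δ)`, so `-C ≥ L + δ` and the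
shifted off-diagonal entries `K i j + C ≤ L + δ + C` are nonpositive. A symmetric matrix with
nonnegative row sums and nonpositive off-diagonal entries is positive semidefinite, because its
quadratic form is `∑ᵢ (∑ⱼ Mᵢⱼ) xᵢ² + ½ ∑ᵢⱼ (-Mᵢⱼ) (xᵢ - xⱼ)²`.
-/

open Finset

namespace Matrix

variable {ι R : Type*} [Fintype ι]

theorem two_mul_dotProduct_mulVec_eq_sum_rowSum_sub_sum_sq [CommRing R]
    {M : Matrix ι ι R} (hM : M.IsSymm) (x : ι → R) :
    2 * (x ⬝ᵥ M *ᵥ x)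
      = 2 * ∑ i, (∑ j, M i j) * x i ^ 2 - ∑ i, ∑ j, M i j * (x i - x j) ^ 2 := by
  have hswap : ∑ i, ∑ j, M i j * x j ^ 2 = ∑ i, ∑ j, M i j * x i ^ 2 := by
    rw [sum_comm]
    simp_rw [hM.apply]
  have hexpand : ∑ i, ∑ j, M i j * (x i - x j) ^ 2
      = 2 * ∑ i, ∑ j, M i j * x i ^ 2 - 2 * (x ⬝ᵥ M *ᵥ x) := by
    have hterm : ∀ i j, M i j * (x i - x j) ^ 2
        = M i j * x i ^ 2 + M i j * x j ^ 2 - 2 * (x i * (M i j * x j)) := fun i j => by ring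
    simp only [hterm, sum_sub_distrib, sum_add_distrib, hswap, dotProduct, mulVec,
      ← mul_sum]
    ring
  rw [hexpand]
  simp only [sum_mul]
  ring

theorem posSemidef_of_rowSum_nonneg_of_offDiag_nonpos [CommRing R] [LinearOrder R]
    [IsStrictOrderedRing R] [StarRing R] [TrivialStar R]
    {M : Matrix ι ι R} (hM : M.IsSymm) (hrow : ∀ i, 0 ≤ ∑ j, M i j)
    (hoff : ∀ i j, i ≠ j → M i j ≤ 0) :
    M.PosSemidef := by
  refine posSemidef_iff_dotProduct_mulVec.2 ⟨isHermitian_iff_isSymm.2 hM, fun x => ?_⟩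
  have hdiag : 0 ≤ ∑ i, (∑ j, M i j) * x i ^ 2 :=
    sum_nonneg fun i _ => mul_nonneg (hrow i) (sq_nonneg _)
  have hdiff : ∑ i, ∑ j, M i j * (x i - x j) ^ 2 ≤ 0 := by
    refine sum_nonpos fun i _ => sum_nonpos fun j _ => ?_
    rcases eq_or_ne i j with rfl | hij
    · simp
    · exact mul_nonpos_of_nonpos_of_nonneg (hoff i j hij) (sq_nonneg _)
  have hquad := two_mul_dotProduct_mulVec_eq_sum_rowSum_sub_sum_sq hM x
  rw [star_trivial]
  linarith

theorem diag_add_card_sub_one_mul_le_rowSum [CommRing R] [PartialOrder R] [IsOrderedRing R]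
    {K : Matrix ι ι R} {L : R} (i : ι) (hoff : ∀ j, i ≠ j → L ≤ K i j) :
    K i i + ((Fintype.card ι : R) - 1) * L ≤ ∑ j, K i j := by
  classical
  have hcard : ((univ.erase i).card : R) = (Fintype.card ι : R) - 1 := by
    rw [card_erase_of_mem (mem_univ i), card_univ,
      Nat.cast_sub (Fintype.card_pos_iff.2 ⟨i⟩), Nat.cast_one]
  have hrest := card_nsmul_le_sum (univ.erase i) (K i) L
    fun j hj => hoff j (ne_of_mem_erase hj).symm
  rw [nsmul_eq_mul, hcard] at hrest
  rw [← add_sum_erase _ _ (mem_univ i)]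
  exact add_le_add_right hrest _

end Matrix

theorem stmt1_general (N : ℕ) (hN : 1 ≤ N) (K : Matrix (Fin N) (Fin N) ℝ)
    (hsymm : ∀ i j, K i j = K j i)
    (L δ : ℝ)
    (hoff : ∀ i j, i ≠ j → L ≤ K i j ∧ K i j ≤ L + δ)
    (hdiag : ∀ i, K i i ≥ L + (N : ℝ) * δ) :
    Matrix.PosSemidef (Matrix.of fun i j =>
      K i j + (- Finset.univ.inf'
        (Finset.univ_nonempty_iff.mpr (Fin.pos_iff_nonempty.mp hN))
        (fun i => (1 / (N : ℝ)) * ∑ j, K i j))) := by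
  have hNpos : (0 : ℝ) < N := by exact_mod_cast hN
  set m := Finset.univ.inf' (Finset.univ_nonempty_iff.mpr (Fin.pos_iff_nonempty.mp hN))
    (fun i => (1 / (N : ℝ)) * ∑ j, K i j)
  have hm_le : ∀ i, N * m ≤ ∑ j, K i j := fun i => by
    have := inf'_le (fun i => (1 / (N : ℝ)) * ∑ j, K i j) (mem_univ i)
    rwa [one_div_mul_eq_div, le_div_iff₀' hNpos] at this
  have hm_ge : L + δ ≤ m := le_inf' _ _ fun i _ => by
    have hrow := Matrix.diag_add_card_sub_one_mul_le_rowSum i fun j hij => (hoff i j hij).1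
    rw [Fintype.card_fin] at hrow
    rw [one_div_mul_eq_div, le_div_iff₀' hNpos]
    linarith [hdiag i]
  refine Matrix.posSemidef_of_rowSum_nonneg_of_offDiag_nonpos
    (Matrix.IsSymm.ext fun i j => by simp [hsymm i j]) (fun i => ?_) fun i j hij => ?_
  · simp only [Matrix.of_apply, sum_add_distrib, sum_const, card_univ,
      Fintype.card_fin, nsmul_eq_mul]
    linarith [hm_le i]
  · simp only [Matrix.of_apply]
    linarith [(hoff i j hij).2]

/-- Under the same hypotheses as Statement 0, the specific choice
`C := - min_i (1/N) · ∑_j K i j` makes the matrix `K i j + C` positive semidefinite. -/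
theorem stmt1 (N : ℕ) (hN : 1 ≤ N) (K : Matrix (Fin N) (Fin N) ℝ)
    (hsymm : ∀ i j, K i j = K j i)
    (L δ : ℝ) (hδ : 0 ≤ δ) (hLδ : L + δ ≤ 0)
    (hoff : ∀ i j, i ≠ j → L ≤ K i j ∧ K i j ≤ L + δ)
    (hdiag : ∀ i, K i i ≥ L + (N : ℝ) * δ) :
    Matrix.PosSemidef (Matrix.of fun i j =>
      K i j + (- Finset.univ.inf'
        (Finset.univ_nonempty_iff.mpr (Fin.pos_iff_nonempty.mp hN))
        (fun i => (1 / (N : ℝ)) * ∑ j, K i j))) :=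
  stmt1_general N hN K hsymm L δ hoff hdiag
end

section
/- Let X be a finite nonempty type, let Pco : X × X → ℝ be a symmetric probability mass function (Pco(a,b) = Pco(b,a) ≥ 0, summing to 1) with all values strictly positive, and let P(a) = ∑_{b} Pco(a,b) be its marginal. Fix p_pos ∈ (0,1). Define the binary NCE loss of a function g : X × X → ℝ as L(g) = p_pos · ∑_{(a,b)} Pco(a,b)·(−log σ(g(a,b))) + (1 − p_pos) · ∑_{(a,b)} P(a)·P(b)·(−log σ(−g(a,b))), where σ(t) = 1/(1 + exp(−t)). Then the function g*(a,b) = log( Pco(a,b) / (P(a)·P(b)) ) + log( p_pos / (1 − p_pos) ) satisfies L(g*) ≤ L(g) for every g : X × X → ℝ, with equality if and only if g = g*. -/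
/-!
The loss is a sum over pairs `p` of `α p · (−log σ(g p)) + β p · (−log σ(−g p))` with
`α p = p_pos · Pco p` and `β p = (1 − p_pos) · P p.1 · P p.2`. As `σ(−t) = 1 − σ(t)`, each summand
is a binary cross-entropy in `σ(g p)`, which by Gibbs' inequality (`log x < x − 1` for `x ≠ 1`) is
uniquely minimized at `σ(g p) = α p / (α p + β p)`, that is at `g p = log (α p / β p) = g* p`.
-/

/-- The logistic sigmoid `σ(t) = 1/(1 + exp (−t))`. -/
noncomputable def sigmoid (t : ℝ) : ℝ := 1 / (1 + Real.exp (-t))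

open Finset

lemma sigmoid_eq_real_sigmoid : sigmoid = Real.sigmoid := by
  funext t
  rw [sigmoid, Real.sigmoid_def, one_div]

namespace Real

lemma sigmoid_log_div {α β : ℝ} (hα : 0 < α) (hβ : 0 < β) :
    sigmoid (log (α / β)) = α / (α + β) := by
  rw [sigmoid_def, ← log_inv, exp_log (by positivity), inv_div]
  field_simp

lemma mul_log_add_mul_log_one_sub_lt {α β s : ℝ} (hα : 0 < α) (hβ : 0 < β) (hs0 : 0 < s)
    (hs1 : s < 1) (hs : s ≠ α / (α + β)) :
    α * log s + β * log (1 - s) < α * log (α / (α + β)) + β * log (β / (α + β)) := by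
  set q := α / (α + β) with hq
  have hq0 : 0 < q := by positivity
  have hq1 : 0 < 1 - q := by rw [hq]; field_simp; linarith
  have hβq : β / (α + β) = 1 - q := by rw [hq]; field_simp; ring
  have h1 : log (s / q) < s / q - 1 :=
    log_lt_sub_one_of_pos (by positivity) (div_ne_one_of_ne hs)
  have h2 : log ((1 - s) / (1 - q)) ≤ (1 - s) / (1 - q) - 1 :=
    log_le_sub_one_of_pos (div_pos (by linarith) hq1)
  rw [log_div hs0.ne' hq0.ne'] at h1
  rw [log_div (by linarith) hq1.ne'] at h2
  have hαq : α / q = α + β := by rw [hq]; field_simp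
  have hβq' : β / (1 - q) = α + β := by rw [← hβq]; field_simp
  have e1 : α * (s / q - 1) = (α + β) * s - α := by rw [← hαq]; field_simp
  have e2 : β * ((1 - s) / (1 - q) - 1) = (α + β) * (1 - s) - β := by rw [← hβq']; field_simp
  rw [hβq]
  linarith [mul_lt_mul_of_pos_left h1 hα, mul_le_mul_of_nonneg_left h2 hβ.le]

end Real

noncomputable def logisticLoss (α β t : ℝ) : ℝ :=
  α * -Real.log (Real.sigmoid t) + β * -Real.log (Real.sigmoid (-t))

lemma logisticLoss_lt {α β t : ℝ} (hα : 0 < α) (hβ : 0 < β) (ht : t ≠ Real.log (α / β)) :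
    logisticLoss α β (Real.log (α / β)) < logisticLoss α β t := by
  have hs : Real.sigmoid t ≠ α / (α + β) := by
    rw [← Real.sigmoid_log_div hα hβ]
    exact Real.sigmoid_injective.ne ht
  have hβ' : 1 - α / (α + β) = β / (α + β) := by field_simp; ring
  have := Real.mul_log_add_mul_log_one_sub_lt hα hβ (Real.sigmoid_pos t)
    (Real.sigmoid_lt_one t) hs
  simp only [logisticLoss, Real.sigmoid_neg, Real.sigmoid_log_div hα hβ, hβ']
  linarith

lemma sum_le_sum_and_eq_iff_of_strict_min {ι : Type*} [Fintype ι] {f : ι → ℝ → ℝ} {m : ι → ℝ}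
    (hf : ∀ i t, t ≠ m i → f i (m i) < f i t) (g : ι → ℝ) :
    (∑ i, f i (m i) ≤ ∑ i, f i (g i)) ∧ (∑ i, f i (g i) = ∑ i, f i (m i) ↔ g = m) := by
  have hle : ∀ i, f i (m i) ≤ f i (g i) := fun i ↦ by
    rcases eq_or_ne (g i) (m i) with h | h
    · rw [h]
    · exact (hf i _ h).le
  refine ⟨sum_le_sum fun i _ ↦ hle i, fun h ↦ ?_, fun h ↦ by rw [h]⟩
  by_contra hne
  obtain ⟨i, hi⟩ := Function.ne_iff.mp hne
  exact h.not_gt (sum_lt_sum (fun i _ ↦ hle i) ⟨i, mem_univ i, hf i _ hi⟩)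

theorem stmt7_general {X : Type*} [Fintype X]
    (Pco : X × X → ℝ)
    (hpos : ∀ p : X × X, 0 < Pco p)
    (P : X → ℝ) (hP : ∀ a : X, P a = ∑ b : X, Pco (a, b))
    (ppos : ℝ) (hp0 : 0 < ppos) (hp1 : ppos < 1)
    (L : ((X × X) → ℝ) → ℝ)
    (hL : ∀ g : (X × X) → ℝ,
      L g = ppos * ∑ p : X × X, Pco p * (-Real.log (sigmoid (g p)))
        + (1 - ppos) * ∑ p : X × X, P p.1 * P p.2 * (-Real.log (sigmoid (-(g p)))))
    (gstar : (X × X) → ℝ)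
    (hgstar : ∀ p : X × X,
      gstar p = Real.log (Pco p / (P p.1 * P p.2)) + Real.log (ppos / (1 - ppos))) :
    (∀ g : (X × X) → ℝ, L gstar ≤ L g) ∧
      (∀ g : (X × X) → ℝ, L g = L gstar ↔ g = gstar) := by
  have hPpos (a : X) : 0 < P a := hP a ▸ sum_pos (fun b _ ↦ hpos (a, b)) ⟨a, mem_univ a⟩
  set α : X × X → ℝ := fun p ↦ ppos * Pco p
  set β : X × X → ℝ := fun p ↦ (1 - ppos) * (P p.1 * P p.2)
  have hα (p : X × X) : 0 < α p := mul_pos hp0 (hpos p)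
  have hβ (p : X × X) : 0 < β p := mul_pos (by linarith) (mul_pos (hPpos _) (hPpos _))
  have hL' (g : X × X → ℝ) : L g = ∑ p, logisticLoss (α p) (β p) (g p) := by
    simp only [hL, logisticLoss, mul_sum, ← sum_add_distrib, sigmoid_eq_real_sigmoid, α, β]
    exact sum_congr rfl fun p _ ↦ by ring
  have hgstar' : gstar = fun p ↦ Real.log (α p / β p) := by
    funext p
    have hPco := div_pos (hpos p) (mul_pos (hPpos p.1) (hPpos p.2))
    rw [hgstar, ← Real.log_mul hPco.ne' (div_pos hp0 (by linarith)).ne', div_mul_div_comm,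
      mul_comm (Pco p), mul_comm (P p.1 * P p.2)]
  have key := sum_le_sum_and_eq_iff_of_strict_min (m := gstar)
    (f := fun p ↦ logisticLoss (α p) (β p)) fun p t ht ↦ by
      rw [hgstar'] at ht ⊢
      exact logisticLoss_lt (hα p) (hβ p) ht
  simp only [hL']
  exact ⟨fun g ↦ (key g).1, fun g ↦ (key g).2⟩

/-- The binary NCE loss is uniquely globally minimized by
`g*(a,b) = PMI(a,b) + log (p_pos / (1 − p_pos))`. -/
theorem stmt7 {X : Type*} [Fintype X] [Nonempty X]
    (Pco : X × X → ℝ)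
    (hsymm : ∀ a b : X, Pco (a, b) = Pco (b, a))
    (hpos : ∀ p : X × X, 0 < Pco p)
    (hsum : ∑ p : X × X, Pco p = 1)
    (P : X → ℝ) (hP : ∀ a : X, P a = ∑ b : X, Pco (a, b))
    (ppos : ℝ) (hp0 : 0 < ppos) (hp1 : ppos < 1)
    (L : ((X × X) → ℝ) → ℝ)
    (hL : ∀ g : (X × X) → ℝ,
      L g = ppos * ∑ p : X × X, Pco p * (-Real.log (sigmoid (g p)))
        + (1 - ppos) * ∑ p : X × X, P p.1 * P p.2 * (-Real.log (sigmoid (-(g p)))))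
    (gstar : (X × X) → ℝ)
    (hgstar : ∀ p : X × X,
      gstar p = Real.log (Pco p / (P p.1 * P p.2)) + Real.log (ppos / (1 - ppos))) :
    (∀ g : (X × X) → ℝ, L gstar ≤ L g) ∧
      (∀ g : (X × X) → ℝ, L g = L gstar ↔ g = gstar) :=
  stmt7_general Pco hpos P hP ppos hp0 hp1 L hL gstar hgstar
end

section
/- Let X be a finite nonempty type, let Pco : X × X → ℝ be a symmetric probability mass function with strictly positive values, and let P(a) = ∑_{b} Pco(a,b) be its marginal. Fix K ≥ 1 and define the InfoNCE loss (with temperature 1) of g : X × X → ℝ as L(g) = ∑_{(x,x₊)} Pco(x,x₊) · ∑_{(x₋¹,…,x₋ᴷ)} ( ∏_{i=1}^{K} P(x₋ⁱ) ) · ( −log( exp(g(x,x₊)) / ( exp(g(x,x₊)) + ∑_{i=1}^{K} exp(g(x,x₋ⁱ)) ) ) ). Then for any c : X → ℝ, the function g*(x,y) = log( Pco(x,y) / (P(x)·P(y)) ) + c(x) satisfies L(g*) ≤ L(g) for every g : X × X → ℝ. -/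
/-!
For a fixed anchor `x`, pool the positive sample and the `K` negatives into one tuple
`v : Fin (K + 1) → X`. Since the negatives are exchangeable with the positive, the loss is unchanged
if the positive is placed in any slot `j`, so `(K + 1) · L(g)` is, for each `(x, v)`, a cross-entropy
between the slot weights `w j = Pco(x, v j) ∏_{i ≠ j} P(v i)` and the softmax of the scores
`g(x, v j)`. By Gibbs' inequality this cross-entropy is minimal when the softmax equals `w / ∑ w`,
which is exactly the softmax of `g*`, since `exp (g*(x, v j))` is proportional to `w j`.
-/

open Finset Real

theorem mul_log_div_le_sub {x y : ℝ} (hx : 0 < x) (hy : 0 < y) : x * log (y / x) ≤ y - x :=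
  calc x * log (y / x) ≤ x * (y / x - 1) :=
        mul_le_mul_of_nonneg_left (log_le_sub_one_of_pos (div_pos hy hx)) hx.le
    _ = y - x := by field_simp

theorem sum_mul_neg_log_div_sum_le {ι : Type*} [Fintype ι] {w q : ι → ℝ}
    (hw : ∀ j, 0 < w j) (hq : ∀ j, 0 < q j) (hq1 : ∑ j, q j = 1) :
    ∑ j, w j * -log (w j / ∑ k, w k) ≤ ∑ j, w j * -log (q j) := by
  set W := ∑ k, w k
  have hterm : ∀ j, w j * -log (w j / W) ≤ w j * -log (q j) + (q j * W - w j) := fun j => by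
    have hW : 0 < W := (hw j).trans_le (single_le_sum (fun k _ => (hw k).le) (mem_univ j))
    have := mul_log_div_le_sub (hw j) (mul_pos (hq j) hW)
    rw [← div_div_eq_mul_div, log_div (hq j).ne' (div_pos (hw j) hW).ne'] at this
    linarith
  calc ∑ j, w j * -log (w j / W) ≤ ∑ j, (w j * -log (q j) + (q j * W - w j)) :=
        sum_le_sum fun j _ => hterm j
    _ = ∑ j, w j * -log (q j) := by
        rw [sum_add_distrib, sum_sub_distrib, ← sum_mul, hq1]
        ring

noncomputable def softmax {ι : Type*} [Fintype ι] (s : ι → ℝ) (j : ι) : ℝ :=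
  exp (s j) / ∑ k, exp (s k)

section Softmax

variable {ι : Type*} [Fintype ι]

theorem softmax_pos (s : ι → ℝ) (j : ι) : 0 < softmax s j :=
  div_pos (exp_pos _) (sum_pos (fun _ _ => exp_pos _) ⟨j, mem_univ j⟩)

theorem sum_softmax [Nonempty ι] (s : ι → ℝ) : ∑ j, softmax s j = 1 := by
  simp_rw [softmax, ← sum_div]
  exact div_self (sum_pos (fun _ _ => exp_pos _) univ_nonempty).ne'

theorem softmax_eq_div_sum_of_exp_eq_mul {s w : ι → ℝ} {α : ℝ} (hα : α ≠ 0)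
    (h : ∀ j, exp (s j) = α * w j) (j : ι) : softmax s j = w j / ∑ k, w k := by
  rw [softmax, h j, sum_congr rfl fun k _ => h k, ← mul_sum, mul_div_mul_left _ _ hα]

theorem sum_mul_neg_log_softmax_le_of_exp_eq_mul [Nonempty ι] {s w : ι → ℝ} {α : ℝ}
    (hw : ∀ j, 0 < w j) (hα : α ≠ 0) (h : ∀ j, exp (s j) = α * w j) (t : ι → ℝ) :
    ∑ j, w j * -log (softmax s j) ≤ ∑ j, w j * -log (softmax t j) := by
  simp only [softmax_eq_div_sum_of_exp_eq_mul hα h]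
  exact sum_mul_neg_log_div_sum_le hw (softmax_pos t) (sum_softmax t)

end Softmax

theorem Fintype.sum_sum_apply_eq_card_nsmul {ι α M : Type*} [Fintype ι] [DecidableEq ι]
    [Fintype α] [AddCommMonoid M] (F : α → (ι → α) → M)
    (hF : ∀ a v (σ : Equiv.Perm ι), F a (v ∘ σ) = F a v) (i : ι) :
    ∑ v : ι → α, ∑ j, F (v j) v = Fintype.card ι • ∑ v : ι → α, F (v i) v := by
  have hslot : ∀ j, ∑ v : ι → α, F (v j) v = ∑ v : ι → α, F (v i) v := fun j =>
    Fintype.sum_equiv ((Equiv.swap i j).symm.arrowCongr (Equiv.refl α)) _ _ fun v => by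
      change F (v j) v = F (v (Equiv.swap i j i)) (v ∘ Equiv.swap i j)
      rw [Equiv.swap_apply_left, hF]
  rw [sum_comm]
  simp_rw [hslot]
  rw [sum_const, card_univ]

section InfoNCE

variable {X : Type*} [Fintype X] (Pco : X × X → ℝ) (P : X → ℝ)

/-- `Pco (x, v j) * ∏_{i ≠ j} P (v i)`, written with a division so that it depends on `j` only
through `v j`. -/
noncomputable def slotWeight {n : ℕ} (x : X) (v : Fin n → X) (j : Fin n) : ℝ :=
  Pco (x, v j) / P (v j) * ∏ i, P (v i)

theorem infoNCE_eq_sum_fin_cons (hP : ∀ a, P a ≠ 0) (K : ℕ) (g : X × X → ℝ) :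
    ∑ p : X × X, Pco p * ∑ u : Fin K → X, (∏ i, P (u i)) *
        -log (exp (g p) / (exp (g p) + ∑ i, exp (g (p.1, u i))))
      = ∑ x, ∑ v : Fin (K + 1) → X,
          slotWeight Pco P x v 0 * -log (softmax (fun k => g (x, v k)) 0) := by
  rw [Fintype.sum_prod_type]
  refine sum_congr rfl fun x _ => ?_
  rw [← (Fin.consEquiv fun _ => X).sum_comp, Fintype.sum_prod_type]
  refine sum_congr rfl fun y _ => ?_
  rw [mul_sum]
  refine sum_congr rfl fun u _ => ?_
  simp only [slotWeight, softmax, Fin.consEquiv_apply, Fin.prod_univ_succ, Fin.sum_univ_succ,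
    Fin.cons_zero, Fin.cons_succ]
  field_simp [hP y]

theorem natCast_succ_mul_infoNCE_eq (hP : ∀ a, P a ≠ 0) (K : ℕ) (g : X × X → ℝ) :
    ((K : ℝ) + 1) * ∑ p : X × X, Pco p * ∑ u : Fin K → X, (∏ i, P (u i)) *
        -log (exp (g p) / (exp (g p) + ∑ i, exp (g (p.1, u i))))
      = ∑ x, ∑ v : Fin (K + 1) → X, ∑ j,
          slotWeight Pco P x v j * -log (softmax (fun k => g (x, v k)) j) := by
  rw [infoNCE_eq_sum_fin_cons Pco P hP, mul_sum]
  refine sum_congr rfl fun x _ => ?_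
  have hexchange := Fintype.sum_sum_apply_eq_card_nsmul
    (fun y (v : Fin (K + 1) → X) =>
      Pco (x, y) / P y * (∏ i, P (v i)) * -log (exp (g (x, y)) / ∑ k, exp (g (x, v k))))
    (fun y v σ => by
      simp only [Function.comp_apply, Equiv.prod_comp σ fun i => P (v i),
        Equiv.sum_comp σ fun k => exp (g (x, v k))]) 0
  rw [Fintype.card_fin, nsmul_eq_mul, Nat.cast_succ] at hexchange
  exact hexchange.symm

end InfoNCE

theorem stmt9_general {X : Type*} [Fintype X]
    (Pco : X × X → ℝ)
    (hpos : ∀ p : X × X, 0 < Pco p)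
    (P : X → ℝ) (hP : ∀ a : X, P a = ∑ b : X, Pco (a, b))
    (K : ℕ)
    (L : ((X × X) → ℝ) → ℝ)
    (hL : ∀ g : (X × X) → ℝ,
      L g = ∑ p : X × X, Pco p *
        ∑ xneg : Fin K → X, (∏ i : Fin K, P (xneg i)) *
          (-Real.log (Real.exp (g p) /
            (Real.exp (g p) + ∑ i : Fin K, Real.exp (g (p.1, xneg i))))))
    (c : X → ℝ)
    (gstar : (X × X) → ℝ)
    (hgstar : ∀ p : X × X,
      gstar p = Real.log (Pco p / (P p.1 * P p.2)) + c p.1) :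
    ∀ g : (X × X) → ℝ, L gstar ≤ L g := by
  intro g
  have hPpos : ∀ a, 0 < P a := fun a =>
    hP a ▸ sum_pos (fun b _ => hpos (a, b)) ⟨a, mem_univ a⟩
  have hweight : ∀ x (v : Fin (K + 1) → X) j, 0 < slotWeight Pco P x v j := fun x v j =>
    mul_pos (div_pos (hpos _) (hPpos _)) (prod_pos fun i _ => hPpos _)
  have hexp : ∀ x (v : Fin (K + 1) → X) j, exp (gstar (x, v j)) =
      exp (c x) / (P x * ∏ i, P (v i)) * slotWeight Pco P x v j := fun x v j => by
    have hprod := (prod_pos fun i (_ : i ∈ univ) => hPpos (v i)).ne'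
    rw [hgstar, exp_add, exp_log (div_pos (hpos _) (mul_pos (hPpos x) (hPpos (v j)))),
      slotWeight]
    field_simp [(hPpos x).ne', (hPpos (v j)).ne', hprod]
  refine le_of_mul_le_mul_left ?_ (by positivity : (0 : ℝ) < K + 1)
  rw [hL, hL, natCast_succ_mul_infoNCE_eq Pco P (fun a => (hPpos a).ne'),
    natCast_succ_mul_infoNCE_eq Pco P (fun a => (hPpos a).ne')]
  refine sum_le_sum fun x _ => sum_le_sum fun v _ => ?_
  have hα : exp (c x) / (P x * ∏ i, P (v i)) ≠ 0 :=
    (div_pos (exp_pos _) (mul_pos (hPpos x) (prod_pos fun i _ => hPpos (v i)))).ne'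
  exact sum_mul_neg_log_softmax_le_of_exp_eq_mul (hweight x v) hα (hexp x v) _

/-- The InfoNCE loss (temperature 1, `K ≥ 1` negatives) is globally
minimized by `g*(x,y) = PMI(x,y) + c(x)`, for any offset function `c`. -/
theorem stmt9 {X : Type*} [Fintype X] [Nonempty X]
    (Pco : X × X → ℝ)
    (hsymm : ∀ a b : X, Pco (a, b) = Pco (b, a))
    (hpos : ∀ p : X × X, 0 < Pco p)
    (hsum : ∑ p : X × X, Pco p = 1)
    (P : X → ℝ) (hP : ∀ a : X, P a = ∑ b : X, Pco (a, b))
    (K : ℕ) (hK : 1 ≤ K)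
    (L : ((X × X) → ℝ) → ℝ)
    (hL : ∀ g : (X × X) → ℝ,
      L g = ∑ p : X × X, Pco p *
        ∑ xneg : Fin K → X, (∏ i : Fin K, P (xneg i)) *
          (-Real.log (Real.exp (g p) /
            (Real.exp (g p) + ∑ i : Fin K, Real.exp (g (p.1, xneg i))))))
    (c : X → ℝ)
    (gstar : (X × X) → ℝ)
    (hgstar : ∀ p : X × X,
      gstar p = Real.log (Pco p / (P p.1 * P p.2)) + c p.1) :
    ∀ g : (X × X) → ℝ, L gstar ≤ L g :=
  stmt9_general Pco hpos P hP K L hL c gstar hgstar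
end
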